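/- In the FedAvg setup with uniqueness of samples, fix a neuron h and a round t, and define Ã^h_{t,0} = { x ∈ A^h_t : W^h_{t−1} · x + b^h_{t−1} > 0 }. If some sample x belonging to client k (i.e., (x, y) ∈ D_k for some label y) lies in the round-level activation set A^h_t, then there exists a sample x' belonging to client k (i.e., (x', y') ∈ D_k for some label y') with x' ∈ Ã^h_{t,0}. -/

import Mathlib

noncomputable section

/-- Pre-activation `W^h · x + b^h` of neuron `h` on sample `x`. -/
def preact {d H : ℕ} (W : Fin H → Fin d → ℝ) (b : Fin H → ℝ) (x : Fin d → ℝ)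
    (h : Fin H) : ℝ :=
  (∑ j, W h j * x j) + b h

/-- Componentwise ReLU output of the first layer. -/
def reluVec {d H : ℕ} (W : Fin H → Fin d → ℝ) (b : Fin H → ℝ) (x : Fin d → ℝ) :
    Fin H → ℝ :=
  fun h => max (preact W b x h) 0

/-- `F_{φ,y}(z) = ℓ(f(φ, z), y)`. -/
def Floss {H r C : ℕ} {Y : Type*} (f : (Fin r → ℝ) → (Fin H → ℝ) → Fin C → ℝ)
    (l : (Fin C → ℝ) → Y → ℝ) (φ : Fin r → ℝ) (y : Y) (z : Fin H → ℝ) : ℝ :=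
  l (f φ z) y

/-- Partial derivative of `F : ℝ^H → ℝ` in the `h`-th coordinate at `z`. -/
def dFh {H : ℕ} (F : (Fin H → ℝ) → ℝ) (z : Fin H → ℝ) (h : Fin H) : ℝ :=
  fderiv ℝ F z (Pi.single h 1)

/-- The loss of the model `θ = (W, b, φ)` on the batch `B`:
`L(θ; B) = ∑_{(x,y) ∈ B} ℓ(f(φ, ReLU(W x + b)), y)`. -/
def batchLoss {d H r C : ℕ} {Y : Type*} (f : (Fin r → ℝ) → (Fin H → ℝ) → Fin C → ℝ)
    (l : (Fin C → ℝ) → Y → ℝ)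
    (θ : (Fin H → Fin d → ℝ) × (Fin H → ℝ) × (Fin r → ℝ))
    (B : Finset ((Fin d → ℝ) × Y)) : ℝ :=
  ∑ p ∈ B, Floss f l θ.2.2 p.2 (reluVec θ.1 θ.2.1 p.1)

open Classical in
/-- Batch-level activation set `A^h(θ, B)` of neuron `h`, as a finset of
sample/label pairs of the batch. -/
def activB {d H r C : ℕ} {Y : Type*} (f : (Fin r → ℝ) → (Fin H → ℝ) → Fin C → ℝ)
    (l : (Fin C → ℝ) → Y → ℝ)
    (θ : (Fin H → Fin d → ℝ) × (Fin H → ℝ) × (Fin r → ℝ))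
    (B : Finset ((Fin d → ℝ) × Y)) (h : Fin H) : Finset ((Fin d → ℝ) × Y) :=
  B.filter (fun p => 0 < preact θ.1 θ.2.1 p.1 h ∧
    dFh (Floss f l θ.2.2 p.2) (reluVec θ.1 θ.2.1 p.1) h ≠ 0)

/-- The gradient of a function on the parameter space, assembled coordinatewise
from directional derivatives. -/
def gradP {d H r : ℕ} (L : ((Fin H → Fin d → ℝ) × (Fin H → ℝ) × (Fin r → ℝ)) → ℝ)
    (θ : (Fin H → Fin d → ℝ) × (Fin H → ℝ) × (Fin r → ℝ)) :
    (Fin H → Fin d → ℝ) × (Fin H → ℝ) × (Fin r → ℝ) :=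
  (fun h j => fderiv ℝ L θ (Pi.single h (Pi.single j 1), 0, 0),
   fun h => fderiv ℝ L θ (0, Pi.single h 1, 0),
   fun s => fderiv ℝ L θ (0, 0, Pi.single s 1))

/-- Round-level activation set `A^h_t` of neuron `h`: the set of samples activating
neuron `h` at some local update of some client during the round. -/
def roundActiv {d H r C K : ℕ} {Y : Type*} (f : (Fin r → ℝ) → (Fin H → ℝ) → Fin C → ℝ)
    (l : (Fin C → ℝ) → Y → ℝ) (n : ℕ)
    (θ : Fin K → ℕ → ((Fin H → Fin d → ℝ) × (Fin H → ℝ) × (Fin r → ℝ)))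
    (Bt : Fin K → ℕ → Finset ((Fin d → ℝ) × Y)) (h : Fin H) : Set (Fin d → ℝ) :=
  {x | ∃ k, ∃ i < n, ∃ y, (x, y) ∈ activB f l (θ k i) (Bt k i) h}

/-
The incoming parameters `(W^h, b^h)` of neuron `h` move in a local SGD step only if some sample
of the batch activates `h`: a sample with negative pre-activation is cut off by the ReLU, and for
one with positive pre-activation the chain rule produces the factor `∂_h F = 0`. Nondegeneracy
makes this computation valid along the directions `(Pi.single h v, Pi.single h β, 0)`. So on the
client owning `x` (unique by the uniqueness of samples), neuron `h` still has the pre-activations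
of `θ_{t-1}` at the first local step where it is activated, and the sample activating it there
lies in `Ã^h_{t,0}`.
-/

open Filter Topology

namespace FedAvg

abbrev Params (d H r : ℕ) := (Fin H → Fin d → ℝ) × (Fin H → ℝ) × (Fin r → ℝ)

variable {d H r C : ℕ} {Y : Type*}

lemma hasDerivAt_max_affine_zero {a : ℝ} (ha : a ≠ 0) (c : ℝ) :
    HasDerivAt (fun t : ℝ => max (a + t * c) 0) (if 0 < a then c else 0) 0 := by
  have hcont : Continuous fun t : ℝ => a + t * c := by fun_prop
  rcases ha.lt_or_gt with hneg | hpos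
  · have hev : (fun t : ℝ => max (a + t * c) 0) =ᶠ[𝓝 0] fun _ => 0 := by
      filter_upwards [hcont.continuousAt.eventually (eventually_lt_nhds (by simpa using hneg))]
        with t ht using max_eq_right ht.le
    rw [if_neg hneg.not_gt]
    exact (hasDerivAt_const 0 0).congr_of_eventuallyEq hev
  · have hev : (fun t : ℝ => max (a + t * c) 0) =ᶠ[𝓝 0] fun t => a + t * c := by
      filter_upwards [hcont.continuousAt.eventually (eventually_gt_nhds (by simpa using hpos))]
        with t ht using max_eq_left ht.le
    rw [if_pos hpos]
    simpa using (((hasDerivAt_id (0 : ℝ)).mul_const c).const_add a).congr_of_eventuallyEq hev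

lemma preact_add_smul_single (W : Fin H → Fin d → ℝ) (b : Fin H → ℝ) (x : Fin d → ℝ)
    (h h' : Fin H) (v : Fin d → ℝ) (β t : ℝ) :
    preact (W + t • (Pi.single h v : Fin H → Fin d → ℝ))
        (b + t • (Pi.single h β : Fin H → ℝ)) x h' =
      preact W b x h' + t * (Pi.single h (∑ j, v j * x j + β) : Fin H → ℝ) h' := by
  rcases eq_or_ne h' h with rfl | hne
  · simp only [preact, Pi.add_apply, Pi.smul_apply, Pi.single_eq_same, smul_eq_mul, add_mul,
      Finset.sum_add_distrib, mul_add, Finset.mul_sum, mul_assoc]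
    ring
  · simp [preact, Pi.single_eq_of_ne hne]

lemma reluVec_add_smul_single (W : Fin H → Fin d → ℝ) (b : Fin H → ℝ) (x : Fin d → ℝ)
    (h : Fin H) (v : Fin d → ℝ) (β t : ℝ) :
    reluVec (W + t • (Pi.single h v : Fin H → Fin d → ℝ))
        (b + t • (Pi.single h β : Fin H → ℝ)) x =
      Function.update (reluVec W b x) h
        (max (preact W b x h + t * (∑ j, v j * x j + β)) 0) := by
  funext h'
  rcases eq_or_ne h' h with rfl | hne
  · simp [reluVec, preact_add_smul_single]
  · simp [reluVec, preact_add_smul_single, hne]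

lemma hasDerivAt_comp_update {F : (Fin H → ℝ) → ℝ} {z : Fin H → ℝ}
    (hF : DifferentiableAt ℝ F z) {h : Fin H} {g : ℝ → ℝ} {g' t : ℝ} (hg : HasDerivAt g g' t)
    (hgt : g t = z h) :
    HasDerivAt (fun s => F (Function.update z h (g s))) (g' * dFh F z h) t := by
  have hupd := (hasDerivAt_update z h (g t)).scomp t hg
  simpa [dFh, Pi.single_smul, Function.comp_def] using
    hF.hasFDerivAt.comp_hasDerivAt_of_eq t hupd (by simp [hgt])

lemma differentiable_floss {f : (Fin r → ℝ) → (Fin H → ℝ) → Fin C → ℝ}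
    {l : (Fin C → ℝ) → Y → ℝ}
    (hf : Differentiable ℝ (fun q : (Fin r → ℝ) × (Fin H → ℝ) => f q.1 q.2))
    (hl : ∀ y, Differentiable ℝ (fun u => l u y)) (φ : Fin r → ℝ) (y : Y) :
    Differentiable ℝ (Floss f l φ y) :=
  ((hl y).comp hf).comp (differentiable_const φ |>.prodMk differentiable_id)

lemma hasDerivAt_reluVec_line_eq_zero {F : (Fin H → ℝ) → ℝ} {W : Fin H → Fin d → ℝ}
    {b : Fin H → ℝ} {x : Fin d → ℝ} {h : Fin H}
    (hF : DifferentiableAt ℝ F (reluVec W b x)) (hnd : preact W b x h ≠ 0)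
    (hinact : 0 < preact W b x h → dFh F (reluVec W b x) h = 0) (v : Fin d → ℝ) (β : ℝ) :
    HasDerivAt (fun t : ℝ => F (reluVec (W + t • (Pi.single h v : Fin H → Fin d → ℝ))
      (b + t • (Pi.single h β : Fin H → ℝ)) x)) 0 0 := by
  simp_rw [reluVec_add_smul_single]
  convert hasDerivAt_comp_update (h := h) hF
    (hasDerivAt_max_affine_zero hnd (∑ j, v j * x j + β)) (by simp [reluVec]) using 1
  split_ifs with hpos
  · rw [hinact hpos, mul_zero]
  · rw [zero_mul]

lemma fderiv_batchLoss_single_eq_zero {f : (Fin r → ℝ) → (Fin H → ℝ) → Fin C → ℝ}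
    {l : (Fin C → ℝ) → Y → ℝ}
    (hF : ∀ φ y, Differentiable ℝ (Floss f l φ y)) {θ : Params d H r}
    {B : Finset ((Fin d → ℝ) × Y)} {h : Fin H}
    (hnd : ∀ p ∈ B, preact θ.1 θ.2.1 p.1 h ≠ 0) (hB : activB f l θ B h = ∅)
    (v : Fin d → ℝ) (β : ℝ) :
    fderiv ℝ (fun ψ => batchLoss f l ψ B) θ ((Pi.single h v, Pi.single h β, 0) : Params d H r)
      = 0 := by
  set L := fun ψ => batchLoss f l ψ B
  set e : Params d H r := (Pi.single h v, Pi.single h β, 0)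
  -- Where `L` is not differentiable, `fderiv` is `0` by convention; otherwise it is the
  -- derivative along the line `t ↦ θ + t • e`.
  by_cases hL : DifferentiableAt ℝ L θ
  swap
  · rw [fderiv_zero_of_not_differentiableAt hL]; rfl
  have hline : HasDerivAt (fun t : ℝ => L (θ + t • e)) 0 0 := by
    have hinact : ∀ p ∈ B, 0 < preact θ.1 θ.2.1 p.1 h →
        dFh (Floss f l θ.2.2 p.2) (reluVec θ.1 θ.2.1 p.1) h = 0 := fun p hp hpos => by
      by_contra hd
      exact Finset.eq_empty_iff_forall_notMem.1 hB p (Finset.mem_filter.2 ⟨hp, hpos, hd⟩)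
    simpa [L, e, batchLoss] using HasDerivAt.fun_sum fun p hp =>
      hasDerivAt_reluVec_line_eq_zero (hF θ.2.2 p.2 _) (hnd p hp)
        (hinact p hp) v β
  have hcomp : HasDerivAt (fun t : ℝ => L (θ + t • e)) (fderiv ℝ L θ e) 0 :=
    hL.hasFDerivAt.comp_hasDerivAt_of_eq 0
      (by simpa using ((hasDerivAt_id (0 : ℝ)).smul_const e).const_add θ) (by simp)
  exact hcomp.unique hline

lemma preact_sgd_step_eq {f : (Fin r → ℝ) → (Fin H → ℝ) → Fin C → ℝ}
    {l : (Fin C → ℝ) → Y → ℝ}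
    (hF : ∀ φ y, Differentiable ℝ (Floss f l φ y)) {θ θ' : Params d H r}
    {B : Finset ((Fin d → ℝ) × Y)} {h : Fin H} {η : ℝ}
    (hstep : θ' = θ - η • gradP (fun ψ => batchLoss f l ψ B) θ)
    (hnd : ∀ p ∈ B, preact θ.1 θ.2.1 p.1 h ≠ 0) (hB : activB f l θ B h = ∅)
    (x : Fin d → ℝ) :
    preact θ'.1 θ'.2.1 x h = preact θ.1 θ.2.1 x h := by
  have hW : (gradP (fun ψ => batchLoss f l ψ B) θ).1 h = 0 := funext fun j => by
    simpa [gradP] using fderiv_batchLoss_single_eq_zero hF hnd hB (Pi.single j 1) 0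
  have hb : (gradP (fun ψ => batchLoss f l ψ B) θ).2.1 h = 0 := by
    simpa [gradP] using fderiv_batchLoss_single_eq_zero hF hnd hB 0 1
  subst hstep
  simp [preact, hW, hb]

theorem exists_mem_activB_preact_init_pos {f : (Fin r → ℝ) → (Fin H → ℝ) → Fin C → ℝ}
    {l : (Fin C → ℝ) → Y → ℝ}
    (hF : ∀ φ y, Differentiable ℝ (Floss f l φ y)) {n : ℕ} {η : ℝ} {θ : ℕ → Params d H r}
    {B : ℕ → Finset ((Fin d → ℝ) × Y)} {h : Fin H}
    (hstep : ∀ i < n, θ (i + 1) = θ i - η • gradP (fun ψ => batchLoss f l ψ (B i)) (θ i))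
    (hnd : ∀ i < n, ∀ p ∈ B i, preact (θ i).1 (θ i).2.1 p.1 h ≠ 0)
    (hact : ∃ i, i < n ∧ (activB f l (θ i) (B i) h).Nonempty) :
    ∃ i < n, ∃ p ∈ activB f l (θ i) (B i) h, 0 < preact (θ 0).1 (θ 0).2.1 p.1 h := by
  classical
  obtain ⟨hn, p, hp⟩ := Nat.find_spec hact
  have hfrozen : ∀ j ≤ Nat.find hact,
      preact (θ j).1 (θ j).2.1 p.1 h = preact (θ 0).1 (θ 0).2.1 p.1 h := by
    intro j hj
    induction j with
    | zero => rfl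
    | succ j ih =>
      have hjn : j < n := by omega
      have hB : activB f l (θ j) (B j) h = ∅ :=
        Finset.not_nonempty_iff_eq_empty.1 fun hne => Nat.find_min hact (by omega) ⟨hjn, hne⟩
      rw [preact_sgd_step_eq hF (hstep j hjn) (hnd j hjn) hB, ih (by omega)]
  refine ⟨Nat.find hact, hn, p, hp, ?_⟩
  rw [← hfrozen _ le_rfl]
  exact (Finset.mem_filter.1 hp).2.1

end FedAvg

open FedAvg in
theorem stmt8_general {d H r C K : ℕ} {Y : Type*}
    (f : (Fin r → ℝ) → (Fin H → ℝ) → Fin C → ℝ)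
    (l : (Fin C → ℝ) → Y → ℝ)
    (hf : Differentiable ℝ (fun q : (Fin r → ℝ) × (Fin H → ℝ) => f q.1 q.2))
    (hl : ∀ y, Differentiable ℝ (fun u => l u y))
    (n : ℕ) (η : ℝ)
    (θprev : (Fin H → Fin d → ℝ) × (Fin H → ℝ) × (Fin r → ℝ))
    (D : Fin K → Finset ((Fin d → ℝ) × Y))
    (Bt : Fin K → ℕ → Finset ((Fin d → ℝ) × Y))
    (θ : Fin K → ℕ → ((Fin H → Fin d → ℝ) × (Fin H → ℝ) × (Fin r → ℝ)))
    (hBD : ∀ k, ∀ i < n, Bt k i ⊆ D k)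
    (hinit : ∀ k, θ k 0 = θprev)
    (hstep : ∀ k, ∀ i < n,
      θ k (i + 1) = θ k i - η • gradP (fun ψ => batchLoss f l ψ (Bt k i)) (θ k i))
    (hnd : ∀ k, ∀ i < n, ∀ h' : Fin H, ∀ p ∈ Bt k i,
      preact (θ k i).1 (θ k i).2.1 p.1 h' ≠ 0)
    (hunique : ∀ k₁ k₂ : Fin K, ∀ p₁ ∈ D k₁, ∀ p₂ ∈ D k₂, p₁.1 = p₂.1 → k₁ = k₂ ∧ p₁ = p₂)
    (h : Fin H) (k : Fin K) (x : Fin d → ℝ)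
    (hxk : ∃ y, (x, y) ∈ D k)
    (hxA : x ∈ roundActiv f l n θ Bt h) :
    ∃ x' : Fin d → ℝ, (∃ y', (x', y') ∈ D k) ∧
      x' ∈ roundActiv f l n θ Bt h ∧ 0 < preact θprev.1 θprev.2.1 x' h := by
  obtain ⟨y, hxy⟩ := hxk
  obtain ⟨k', i, hi, y', hact⟩ := hxA
  obtain rfl : k = k' :=
    (hunique k k' _ hxy _ (hBD k' i hi (Finset.mem_filter.1 hact).1) rfl).1
  obtain ⟨j, hj, p, hp, hpos⟩ := exists_mem_activB_preact_init_pos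
    (differentiable_floss hf hl) (hstep k)
    (fun i hi p hp => hnd k i hi h p hp) ⟨i, hi, _, hact⟩
  rw [hinit] at hpos
  exact ⟨p.1, ⟨p.2, hBD k j hj (Finset.mem_filter.1 hp).1⟩, ⟨k, j, hj, p.2, hp⟩, hpos⟩

theorem stmt8 {d H r C K : ℕ} {Y : Type*} (hK : 0 < K)
    (f : (Fin r → ℝ) → (Fin H → ℝ) → Fin C → ℝ)
    (l : (Fin C → ℝ) → Y → ℝ)
    (hf : Differentiable ℝ (fun q : (Fin r → ℝ) × (Fin H → ℝ) => f q.1 q.2))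
    (hl : ∀ y, Differentiable ℝ (fun u => l u y))
    (n : ℕ) (η : ℝ) (hη : 0 < η)
    (θprev : (Fin H → Fin d → ℝ) × (Fin H → ℝ) × (Fin r → ℝ))
    (D : Fin K → Finset ((Fin d → ℝ) × Y))
    (Bt : Fin K → ℕ → Finset ((Fin d → ℝ) × Y))
    (θ : Fin K → ℕ → ((Fin H → Fin d → ℝ) × (Fin H → ℝ) × (Fin r → ℝ)))
    (hBD : ∀ k, ∀ i < n, Bt k i ⊆ D k)
    (hinit : ∀ k, θ k 0 = θprev)
    (hstep : ∀ k, ∀ i < n,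
      θ k (i + 1) = θ k i - η • gradP (fun ψ => batchLoss f l ψ (Bt k i)) (θ k i))
    (hnd : ∀ k, ∀ i < n, ∀ h' : Fin H, ∀ p ∈ Bt k i,
      preact (θ k i).1 (θ k i).2.1 p.1 h' ≠ 0)
    (hunique : ∀ k₁ k₂ : Fin K, ∀ p₁ ∈ D k₁, ∀ p₂ ∈ D k₂, p₁.1 = p₂.1 → k₁ = k₂ ∧ p₁ = p₂)
    (h : Fin H) (k : Fin K) (x : Fin d → ℝ)
    (hxk : ∃ y, (x, y) ∈ D k)
    (hxA : x ∈ roundActiv f l n θ Bt h) :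
    ∃ x' : Fin d → ℝ, (∃ y', (x', y') ∈ D k) ∧
      x' ∈ roundActiv f l n θ Bt h ∧ 0 < preact θprev.1 θprev.2.1 x' h :=
  stmt8_general f l hf hl n η θprev D Bt θ hBD hinit hstep hnd hunique h k x hxk hxA
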